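/- There is an absolute constant C such that for all s ∈ (0,1], all α > 0, all y ∈ ℝ, and all odd differentiable functions g, h : ℝ → ℝ with g, g', h, h' square-integrable: |δ_α[L_s, g](y)| ≤ C·s·‖g‖_{H¹}·min{α^{1/2}, α^{−1/2}}, and |δ_α[g, h](y)| ≤ C·‖g‖_{H¹}·‖h‖_{H¹}·min{α^{1/2}, α^{−1}}. -/

import Mathlib

open MeasureTheory Real Set Filter

/-- Sliding average `⨍_α f(y) = (1/α) ∫_{y-α}^{y} f(z) dz`. -/
noncomputable def fint (α : ℝ) (f : ℝ → ℝ) (y : ℝ) : ℝ :=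
  (1 / α) * ∫ z in (y - α)..y, f z

/-- Finite difference slope `Δ_α f(y) = (f(y) - f(y-α))/α`. -/
noncomputable def slopeOp (α : ℝ) (f : ℝ → ℝ) (y : ℝ) : ℝ :=
  (f y - f (y - α)) / α

/-- The profile `L_s(y) = (2s/π) arctan((1+s²/3) y)`. -/
noncomputable def Ls (s y : ℝ) : ℝ := (2 * s / Real.pi) * Real.arctan ((1 + s ^ 2 / 3) * y)

/-- `δ_α[f,g](y) = ⨍_α f ⨍_α g - ⨍_{-α} f ⨍_{-α} g`. -/
noncomputable def deltaOp (α : ℝ) (f g : ℝ → ℝ) (y : ℝ) : ℝ :=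
  fint α f y * fint α g y - fint (-α) f y * fint (-α) g y

/-- `J_α[f,g](y) = ⨍_α f ⨍_α g - 2 f g + ⨍_{-α} f ⨍_{-α} g`. -/
noncomputable def Jop (α : ℝ) (f g : ℝ → ℝ) (y : ℝ) : ℝ :=
  fint α f y * fint α g y - 2 * f y * g y + fint (-α) f y * fint (-α) g y

/-- The `H¹` norm `(∫ g² + ∫ (g')²)^{1/2}`. -/
noncomputable def H1norm (g : ℝ → ℝ) : ℝ :=
  Real.sqrt ((∫ y : ℝ, g y ^ 2) + ∫ y : ℝ, deriv g y ^ 2)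

/-!
Write `δ_α[f, k] = ⨍_α f · (⨍_α k - ⨍_{-α} k) + (⨍_α f - ⨍_{-α} f) · ⨍_{-α} k`.
An average is bounded by the sup norm, and by Cauchy–Schwarz by `α^{-1/2}` times the `L²` norm.
A difference `⨍_α f - ⨍_{-α} f` is the average of `z ↦ f z - f (z + α)`, hence `O(s α)` for
the Lipschitz profile `L_s` and `O(α^{1/2} ‖f'‖_{L²})` for an `H¹` function. Since an odd `g`
vanishes at `0`, `g y ^ 2 = ∫_0^y 2 g g' ≤ ‖g‖_{H¹}²` bounds the sup norm. The sup-norm and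
Lipschitz bounds give the estimates for `α ≤ 1`, the `L²` bounds those for `α ≥ 1`, with `C = 4`.
-/

open intervalIntegral

theorem integral_abs_mul_le_sqrt_mul_sqrt {X : Type*} [MeasurableSpace X] {μ : Measure X}
    {f k : X → ℝ} (hf : MemLp f 2 μ) (hk : MemLp k 2 μ) :
    ∫ x, |f x * k x| ∂μ ≤ √(∫ x, f x ^ 2 ∂μ) * √(∫ x, k x ^ 2 ∂μ) := by
  have h := integral_mul_norm_le_Lp_mul_Lq Real.HolderConjugate.two_two
    (by simpa using hf) (by simpa using hk) (μ := μ)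
  simpa [abs_mul, Real.sqrt_eq_rpow, Real.norm_eq_abs, sq_abs] using h

theorem abs_intervalIntegral_le_sqrt_mul {f : ℝ → ℝ} (hf : MemLp f 2 volume) (a b : ℝ) :
    |∫ x in a..b, f x| ≤ √|b - a| * √(∫ x, f x ^ 2) := by
  have : IsFiniteMeasure (volume.restrict (uIoc a b)) := ⟨by simp [volume_uIoc]⟩
  calc |∫ x in a..b, f x| ≤ ∫ x in uIoc a b, |f x * 1| := by
        simpa using norm_integral_le_integral_norm_uIoc (f := f) (μ := volume)
    _ ≤ √(∫ x in uIoc a b, f x ^ 2) * √(∫ _ in uIoc a b, (1 : ℝ) ^ 2) :=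
        integral_abs_mul_le_sqrt_mul_sqrt (hf.restrict _) (memLp_const 1)
    _ = √(∫ x in uIoc a b, f x ^ 2) * √|b - a| := by simp [measureReal_def, volume_uIoc]
    _ ≤ √(∫ x, f x ^ 2) * √|b - a| := by
        gcongr √?_ * _
        exact setIntegral_le_integral hf.integrable_sq (.of_forall fun _ => sq_nonneg _)
    _ = √|b - a| * √(∫ x, f x ^ 2) := mul_comm _ _

theorem abs_sub_le_sqrt_mul_of_memLp_deriv {g : ℝ → ℝ} (hd : Differentiable ℝ g)
    (hg' : MemLp (deriv g) 2 volume) (a b : ℝ) :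
    |g a - g b| ≤ √|a - b| * √(∫ x, deriv g x ^ 2) := by
  have hint : IntervalIntegrable (deriv g) volume b a :=
    ((hg'.locallyIntegrable one_le_two).integrableOn_isCompact isCompact_uIcc).intervalIntegrable
  rw [← integral_deriv_eq_sub (fun x _ => hd x) hint]
  exact abs_intervalIntegral_le_sqrt_mul hg' b a

theorem sq_le_integral_sq_add_integral_deriv_sq {g : ℝ → ℝ} (hg0 : g 0 = 0)
    (hd : Differentiable ℝ g) (hg : MemLp g 2 volume) (hg' : MemLp (deriv g) 2 volume) (y : ℝ) :
    g y ^ 2 ≤ (∫ x, g x ^ 2) + ∫ x, deriv g x ^ 2 := by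
  have hint : Integrable (fun x => 2 * (g x * deriv g x)) :=
    (hg.integrable_mul hg').const_mul 2
  have ftc : ∫ x in (0 : ℝ)..y, 2 * (g x * deriv g x) = g y ^ 2 := by
    rw [integral_eq_sub_of_hasDerivAt (f := fun x => g x ^ 2) (fun x _ => ?_)
      hint.intervalIntegrable, hg0]
    · ring
    · exact ((hd x).hasDerivAt.pow 2).congr_deriv (by push_cast; ring)
  calc g y ^ 2 ≤ ∫ x in uIoc 0 y, |2 * (g x * deriv g x)| := by
        simpa [ftc] using norm_integral_le_integral_norm_uIoc
          (f := fun x => 2 * (g x * deriv g x)) (a := 0) (b := y) (μ := volume)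
    _ ≤ ∫ x, |2 * (g x * deriv g x)| :=
        setIntegral_le_integral hint.abs (.of_forall fun _ => abs_nonneg _)
    _ = 2 * ∫ x, |g x * deriv g x| := by simp [abs_mul, MeasureTheory.integral_const_mul]
    _ ≤ 2 * (√(∫ x, g x ^ 2) * √(∫ x, deriv g x ^ 2)) := by
        gcongr; exact integral_abs_mul_le_sqrt_mul_sqrt hg hg'
    _ ≤ (∫ x, g x ^ 2) + ∫ x, deriv g x ^ 2 := by
        have := two_mul_le_add_sq (√(∫ x, g x ^ 2)) (√(∫ x, deriv g x ^ 2))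
        rwa [sq_sqrt (integral_nonneg fun _ => sq_nonneg _),
          sq_sqrt (integral_nonneg fun _ => sq_nonneg _), mul_assoc] at this

theorem abs_le_H1norm {g : ℝ → ℝ} (hg0 : g 0 = 0) (hd : Differentiable ℝ g)
    (hg : MemLp g 2 volume) (hg' : MemLp (deriv g) 2 volume) (y : ℝ) : |g y| ≤ H1norm g :=
  Real.abs_le_sqrt (sq_le_integral_sq_add_integral_deriv_sq hg0 hd hg hg' y)

theorem H1norm_nonneg (g : ℝ → ℝ) : 0 ≤ H1norm g := sqrt_nonneg _

theorem sqrt_integral_sq_le_H1norm (g : ℝ → ℝ) : √(∫ x, g x ^ 2) ≤ H1norm g :=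
  Real.sqrt_le_sqrt (le_add_of_nonneg_right (integral_nonneg fun _ => sq_nonneg _))

theorem sqrt_integral_deriv_sq_le_H1norm (g : ℝ → ℝ) : √(∫ x, deriv g x ^ 2) ≤ H1norm g :=
  Real.sqrt_le_sqrt (le_add_of_nonneg_left (integral_nonneg fun _ => sq_nonneg _))

theorem abs_fint_eq (α : ℝ) (f : ℝ → ℝ) (y : ℝ) :
    |fint α f y| = |α|⁻¹ * |∫ z in (y - α)..y, f z| := by
  rw [fint, abs_mul, one_div, abs_inv]

theorem abs_fint_le {f : ℝ → ℝ} {M : ℝ} (hM : ∀ z, |f z| ≤ M) (α y : ℝ) :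
    |fint α f y| ≤ M := by
  have hint := norm_integral_le_of_norm_le_const (a := y - α) (b := y) (f := f)
    fun z _ => hM z
  rw [Real.norm_eq_abs, sub_sub_cancel] at hint
  calc |fint α f y| ≤ |α|⁻¹ * (M * |α|) := by
        rw [abs_fint_eq]; exact mul_le_mul_of_nonneg_left hint (by positivity)
    _ = M * (|α| * |α|⁻¹) := by ring
    _ ≤ M := mul_le_of_le_one_right ((abs_nonneg _).trans (hM 0)) mul_inv_le_one

theorem abs_fint_le_inv_sqrt_mul {f : ℝ → ℝ} (hf : MemLp f 2 volume) (α y : ℝ) :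
    |fint α f y| ≤ (√|α|)⁻¹ * √(∫ x, f x ^ 2) := by
  have hint := abs_intervalIntegral_le_sqrt_mul hf (y - α) y
  rw [sub_sub_cancel] at hint
  calc |fint α f y| ≤ |α|⁻¹ * (√|α| * √(∫ x, f x ^ 2)) := by
        rw [abs_fint_eq]; exact mul_le_mul_of_nonneg_left hint (by positivity)
    _ = (√|α|)⁻¹ * √(∫ x, f x ^ 2) := by
        rw [← mul_assoc, inv_mul_eq_div, Real.sqrt_div_self', one_div]

theorem fint_sub_fint_neg {f : ℝ → ℝ} (hf : LocallyIntegrable f volume) (α y : ℝ) :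
    fint α f y - fint (-α) f y = fint α (fun z => f z - f (z + α)) y := by
  have hi : ∀ a b, IntervalIntegrable f volume a b := fun a b =>
    (hf.integrableOn_isCompact isCompact_uIcc).intervalIntegrable
  have hshift : ∫ z in (y - α)..y, f (z + α) = ∫ z in y..(y + α), f z := by
    rw [integral_comp_add_right f α, sub_add_cancel]
  simp only [fint]
  rw [integral_sub (hi _ _) (by simpa using (hi y (y + α)).comp_add_right α), hshift,
    sub_neg_eq_add, integral_symm (y + α) y]
  ring

theorem abs_fint_sub_fint_neg_le {f : ℝ → ℝ} (hf : LocallyIntegrable f volume) {α M : ℝ}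
    (hM : ∀ z, |f z - f (z + α)| ≤ M) (y : ℝ) : |fint α f y - fint (-α) f y| ≤ M := by
  rw [fint_sub_fint_neg hf]
  exact abs_fint_le hM α y

theorem abs_fint_le_H1norm {g : ℝ → ℝ} (hg0 : g 0 = 0) (hd : Differentiable ℝ g)
    (hg : MemLp g 2 volume) (hg' : MemLp (deriv g) 2 volume) (α y : ℝ) :
    |fint α g y| ≤ H1norm g :=
  abs_fint_le (abs_le_H1norm hg0 hd hg hg') α y

theorem abs_fint_le_inv_sqrt_mul_H1norm {g : ℝ → ℝ} (hg : MemLp g 2 volume) (α y : ℝ) :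
    |fint α g y| ≤ (√|α|)⁻¹ * H1norm g :=
  (abs_fint_le_inv_sqrt_mul hg α y).trans <|
    mul_le_mul_of_nonneg_left (sqrt_integral_sq_le_H1norm g) (by positivity)

theorem abs_fint_sub_fint_neg_le_sqrt_mul_H1norm {g : ℝ → ℝ} (hd : Differentiable ℝ g)
    (hg : MemLp g 2 volume) (hg' : MemLp (deriv g) 2 volume) (α y : ℝ) :
    |fint α g y - fint (-α) g y| ≤ √|α| * H1norm g := by
  refine abs_fint_sub_fint_neg_le (hg.locallyIntegrable one_le_two) (fun z => ?_) y
  calc |g z - g (z + α)| ≤ √|z - (z + α)| * √(∫ x, deriv g x ^ 2) :=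
        abs_sub_le_sqrt_mul_of_memLp_deriv hd hg' _ _
    _ ≤ √|α| * H1norm g := by
        rw [sub_add_cancel_left, abs_neg]
        gcongr
        exact sqrt_integral_deriv_sq_le_H1norm g

theorem abs_arctan_sub_arctan_le (a b : ℝ) : |arctan a - arctan b| ≤ |a - b| := by
  have hderiv : ∀ x ∈ univ, ‖deriv arctan x‖ ≤ 1 := fun x _ => by
    rw [Real.deriv_arctan, Real.norm_eq_abs, abs_of_pos (by positivity)]
    exact div_le_one_of_le₀ (by nlinarith [sq_nonneg x]) (by positivity)
  simpa using Convex.norm_image_sub_le_of_norm_deriv_le (fun x _ => differentiableAt_arctan x)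
    hderiv convex_univ (mem_univ b) (mem_univ a)

theorem continuous_Ls (s : ℝ) : Continuous (Ls s) := by
  unfold Ls; fun_prop

theorem abs_Ls_le {s : ℝ} (hs : 0 ≤ s) (z : ℝ) : |Ls s z| ≤ s := by
  have harctan : |arctan ((1 + s ^ 2 / 3) * z)| ≤ π / 2 :=
    abs_le.2 ⟨(neg_pi_div_two_lt_arctan _).le, (arctan_lt_pi_div_two _).le⟩
  calc |Ls s z| = 2 * s / π * |arctan ((1 + s ^ 2 / 3) * z)| := by
        rw [Ls, abs_mul, abs_of_nonneg (by positivity)]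
    _ ≤ 2 * s / π * (π / 2) := by gcongr
    _ = s := by field_simp

theorem abs_Ls_sub_le {s : ℝ} (hs : 0 ≤ s) (hs1 : s ≤ 1) (a b : ℝ) :
    |Ls s a - Ls s b| ≤ s * |a - b| := by
  have hslope : 2 * (1 + s ^ 2 / 3) ≤ π := by nlinarith [pi_gt_three]
  calc |Ls s a - Ls s b|
      = 2 * s / π * |arctan ((1 + s ^ 2 / 3) * a) - arctan ((1 + s ^ 2 / 3) * b)| := by
        rw [Ls, Ls, ← mul_sub, abs_mul, abs_of_nonneg (by positivity)]
    _ ≤ 2 * s / π * ((1 + s ^ 2 / 3) * |a - b|) := by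
        gcongr
        refine (abs_arctan_sub_arctan_le _ _).trans_eq ?_
        rw [← mul_sub, abs_mul, abs_of_pos (by positivity)]
    _ ≤ s * |a - b| := by
        rw [div_mul_eq_mul_div, div_le_iff₀ pi_pos]
        nlinarith [mul_nonneg hs (abs_nonneg (a - b))]

theorem abs_deltaOp_le {α y A B D E : ℝ} {f k : ℝ → ℝ} (hf : |fint α f y| ≤ A)
    (hk : |fint (-α) k y| ≤ B) (hdf : |fint α f y - fint (-α) f y| ≤ D)
    (hdk : |fint α k y - fint (-α) k y| ≤ E) : |deltaOp α f k y| ≤ A * E + D * B := by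
  have hsplit : deltaOp α f k y = fint α f y * (fint α k y - fint (-α) k y)
      + (fint α f y - fint (-α) f y) * fint (-α) k y := by
    unfold deltaOp; ring
  rw [hsplit]
  refine (abs_add_le _ _).trans ?_
  rw [abs_mul, abs_mul]
  exact add_le_add (mul_le_mul hf hdk (abs_nonneg _) ((abs_nonneg _).trans hf))
    (mul_le_mul hdf hk (abs_nonneg _) ((abs_nonneg _).trans hdf))

theorem abs_deltaOp_Ls_le {s α : ℝ} (hs : 0 ≤ s) (hs1 : s ≤ 1) (hα : 0 < α) {g : ℝ → ℝ}
    (hg0 : g 0 = 0) (hd : Differentiable ℝ g) (hg : MemLp g 2 volume)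
    (hg' : MemLp (deriv g) 2 volume) (y : ℝ) :
    |deltaOp α (Ls s) g y| ≤ 4 * s * H1norm g * min √α (√α)⁻¹ := by
  have hpos : |α| = α := abs_of_pos hα
  have hneg : |-α| = α := by rw [abs_neg, hpos]
  have hL (β : ℝ) : |fint β (Ls s) y| ≤ s := abs_fint_le (abs_Ls_le hs) β y
  rcases le_total α 1 with hα1 | hα1
  · have hsqrt1 : √α ≤ 1 := sqrt_le_one.2 hα1
    have hαs : α ≤ √α := (le_sqrt' hα).2 (by nlinarith)
    have hDL : |fint α (Ls s) y - fint (-α) (Ls s) y| ≤ s * α :=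
      abs_fint_sub_fint_neg_le (continuous_Ls s).locallyIntegrable
        (fun z => by simpa [hpos] using abs_Ls_sub_le hs hs1 z (z + α)) y
    have hDg := abs_fint_sub_fint_neg_le_sqrt_mul_H1norm hd hg hg' α y
    rw [hpos] at hDg
    rw [min_eq_left (hsqrt1.trans ((one_le_inv₀ (sqrt_pos.2 hα)).2 hsqrt1))]
    calc |deltaOp α (Ls s) g y| ≤ s * (√α * H1norm g) + s * α * H1norm g :=
          abs_deltaOp_le (hL α) (abs_fint_le_H1norm hg0 hd hg hg' (-α) y) hDL hDg
      _ ≤ 4 * s * H1norm g * √α := by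
          nlinarith [mul_nonneg hs (H1norm_nonneg g), sqrt_nonneg α]
  · have hsqrt1 : 1 ≤ √α := one_le_sqrt.2 hα1
    have hL2 (β : ℝ) (hβ : |β| = α) : |fint β g y| ≤ (√α)⁻¹ * H1norm g :=
      hβ ▸ abs_fint_le_inv_sqrt_mul_H1norm hg β y
    rw [min_eq_right ((inv_le_one_of_one_le₀ hsqrt1).trans hsqrt1)]
    calc |deltaOp α (Ls s) g y|
        ≤ s * ((√α)⁻¹ * H1norm g + (√α)⁻¹ * H1norm g) + (s + s) * ((√α)⁻¹ * H1norm g) :=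
          abs_deltaOp_le (hL α) (hL2 (-α) hneg)
            ((abs_sub _ _).trans (add_le_add (hL α) (hL (-α))))
            ((abs_sub _ _).trans (add_le_add (hL2 α hpos) (hL2 (-α) hneg)))
      _ = 4 * s * H1norm g * (√α)⁻¹ := by ring

theorem abs_deltaOp_le_H1norm_mul {α : ℝ} (hα : 0 < α) {g h : ℝ → ℝ}
    (hg0 : g 0 = 0) (hh0 : h 0 = 0) (hgd : Differentiable ℝ g) (hhd : Differentiable ℝ h)
    (hg : MemLp g 2 volume) (hg' : MemLp (deriv g) 2 volume)
    (hh : MemLp h 2 volume) (hh' : MemLp (deriv h) 2 volume) (y : ℝ) :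
    |deltaOp α g h y| ≤ 4 * H1norm g * H1norm h * min √α α⁻¹ := by
  have hpos : |α| = α := abs_of_pos hα
  have hneg : |-α| = α := by rw [abs_neg, hpos]
  rcases le_total α 1 with hα1 | hα1
  · have hDg := abs_fint_sub_fint_neg_le_sqrt_mul_H1norm hgd hg hg' α y
    have hDh := abs_fint_sub_fint_neg_le_sqrt_mul_H1norm hhd hh hh' α y
    rw [hpos] at hDg hDh
    rw [min_eq_left ((sqrt_le_one.2 hα1).trans ((one_le_inv₀ hα).2 hα1))]
    calc |deltaOp α g h y| ≤ H1norm g * (√α * H1norm h) + √α * H1norm g * H1norm h :=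
          abs_deltaOp_le (abs_fint_le_H1norm hg0 hgd hg hg' α y)
            (abs_fint_le_H1norm hh0 hhd hh hh' (-α) y) hDg hDh
      _ ≤ 4 * H1norm g * H1norm h * √α := by
          nlinarith [mul_nonneg (H1norm_nonneg g) (H1norm_nonneg h), sqrt_nonneg α]
  · have hL2 {f : ℝ → ℝ} (hf : MemLp f 2 volume) (β : ℝ) (hβ : |β| = α) :
        |fint β f y| ≤ (√α)⁻¹ * H1norm f :=
      hβ ▸ abs_fint_le_inv_sqrt_mul_H1norm hf β y
    rw [min_eq_right ((inv_le_one_of_one_le₀ hα1).trans (one_le_sqrt.2 hα1))]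
    calc |deltaOp α g h y|
        ≤ (√α)⁻¹ * H1norm g * ((√α)⁻¹ * H1norm h + (√α)⁻¹ * H1norm h)
          + ((√α)⁻¹ * H1norm g + (√α)⁻¹ * H1norm g) * ((√α)⁻¹ * H1norm h) :=
          abs_deltaOp_le (hL2 hg α hpos) (hL2 hh (-α) hneg)
            ((abs_sub _ _).trans (add_le_add (hL2 hg α hpos) (hL2 hg (-α) hneg)))
            ((abs_sub _ _).trans (add_le_add (hL2 hh α hpos) (hL2 hh (-α) hneg)))
      _ = 4 * H1norm g * H1norm h * ((√α)⁻¹ * (√α)⁻¹) := by ring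
      _ = 4 * H1norm g * H1norm h * α⁻¹ := by rw [← mul_inv, mul_self_sqrt hα.le]

/-- Uniform bounds on `δ_α[L_s, g]` and `δ_α[g, h]` for odd `H¹` functions. -/
theorem deltaOp_H1_bounds :
    ∃ C : ℝ, 0 < C ∧ ∀ s : ℝ, 0 < s → s ≤ 1 → ∀ α : ℝ, 0 < α → ∀ y : ℝ,
      ∀ g h : ℝ → ℝ, (∀ x : ℝ, g (-x) = - g x) → (∀ x : ℝ, h (-x) = - h x) →
      Differentiable ℝ g → Differentiable ℝ h →
      MemLp g 2 volume → MemLp (deriv g) 2 volume →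
      MemLp h 2 volume → MemLp (deriv h) 2 volume →
      (|deltaOp α (Ls s) g y| ≤ C * s * H1norm g * min (α ^ ((1:ℝ)/2)) (α ^ (-(1:ℝ)/2))) ∧
      (|deltaOp α g h y| ≤ C * H1norm g * H1norm h * min (α ^ ((1:ℝ)/2)) α⁻¹) := by
  refine ⟨4, by norm_num, fun s hs hs1 α hα y g h hg_odd hh_odd hgd hhd hg hg' hh hh' => ?_⟩
  have hsqrt : α ^ ((1 : ℝ) / 2) = √α := (sqrt_eq_rpow α).symm
  have hinv_sqrt : α ^ (-(1 : ℝ) / 2) = (√α)⁻¹ := by rw [neg_div, rpow_neg hα.le, hsqrt]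
  have hg0 : g 0 = 0 := Function.Odd.map_zero hg_odd
  have hh0 : h 0 = 0 := Function.Odd.map_zero hh_odd
  rw [hsqrt, hinv_sqrt]
  exact ⟨abs_deltaOp_Ls_le hs.le hs1 hα hg0 hgd hg hg' y,
    abs_deltaOp_le_H1norm_mul hα hg0 hh0 hgd hhd hg hg' hh hh' y⟩
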